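/- arXiv:1102.0552 — 2 statements merged into one kernel-verified Lean document; each statement's English description precedes it below -/
import Mathlib

section
/- For every k ∈ ℕ there is a locally finite one-ended graph whose unique end has relative degree exactly k: namely the graph obtained from countably many disjoint copies K₁, K₂, K₃, … of the complete graph K_k by adding all edges between K_i and K_{i+1} for each i. -/
open scoped ENNReal

namespace Paper

variable {V : Type*} {W : Type*}

/-- Reachability in `G` by a walk avoiding the vertex set `S`. -/
def ReachAvoid (G : SimpleGraph V) (S : Set V) (u v : V) : Prop :=
  ∃ p : G.Walk u v, ∀ x ∈ p.support, x ∉ S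

/-- A ray (one-way infinite path) in `G`. -/
structure IsRay (G : SimpleGraph V) (f : ℕ → V) : Prop where
  inj : Function.Injective f
  adj : ∀ n, G.Adj (f n) (f (n + 1))

/-- Two rays are equivalent (belong to the same end) if no finite vertex set
separates them: for every finite `S` some vertex of the first ray can be joined
to some vertex of the second by a walk avoiding `S`. -/
def EquivRay (G : SimpleGraph V) (f g : ℕ → V) : Prop :=
  ∀ S : Set V, S.Finite → ∃ m n, ReachAvoid G S (f m) (g n)

/-- The set of ends of `G`: rays modulo equivalence. -/
def Ends (G : SimpleGraph V) :=
  Quot (fun f g : {f : ℕ → V // IsRay G f} => EquivRay G f.1 g.1)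

/-- `v` dominates the ray `f`: there are infinitely many `v`–`V(f)` paths
pairwise disjoint except in `v`. -/
def DominatesRay (G : SimpleGraph V) (v : V) (f : ℕ → V) : Prop :=
  ∃ (g : ℕ → ℕ) (p : ∀ n, G.Walk v (f (g n))),
    Function.Injective g ∧ (∀ n, (p n).IsPath) ∧
    ∀ m n, m ≠ n → ∀ x ∈ (p m).support, x ∈ (p n).support → x = v

/-- The set of vertices dominating the end of the ray `r`. -/
def Dom (G : SimpleGraph V) (r : ℕ → V) : Set V := {v | DominatesRay G v r}

/-- Vertex-boundary of the vertex set `A`. -/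
def vBoundary (G : SimpleGraph V) (A : Set V) : Set V :=
  {x | x ∈ A ∧ ∃ y, y ∉ A ∧ G.Adj x y}

/-- Edge-boundary of the vertex set `A`. -/
def eBoundary (G : SimpleGraph V) (A : Set V) : Set (Sym2 V) :=
  {e | ∃ x y, x ∈ A ∧ y ∉ A ∧ G.Adj x y ∧ e = s(x, y)}

/-- `S` is a `V'`–`Ω(A)` separator: `V' ⊄ S` and no component of `G - S`
contains both a vertex of `V'` and (the tail of) a ray lying in `A`. -/
def SepVertsEndsIn (G : SimpleGraph V) (V' S A : Set V) : Prop :=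
  ¬ V' ⊆ S ∧ ∀ v ∈ V', ∀ f : ℕ → V, IsRay G f → Set.range f ⊆ A →
    ∀ n, (∀ m, n ≤ m → f m ∉ S) → ¬ ReachAvoid G S v (f n)

/-- `S` is an inclusion-minimal `V'`–`Ω(A)` separator. -/
def MinSepVertsEndsIn (G : SimpleGraph V) (V' S A : Set V) : Prop :=
  SepVertsEndsIn G V' S A ∧ ∀ S' ⊂ S, ¬ SepVertsEndsIn G V' S' A

/-- The graph `G_ω`: `G` minus the dominating vertices of the end of `r`. -/
def Gmin (G : SimpleGraph V) (r : ℕ → V) : SimpleGraph ((Dom G r)ᶜ : Set V) :=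
  G.induce ((Dom G r)ᶜ : Set V)

/-- A ray of `G_ω` belonging to (the unique end `ω̂` induced by) the end `ω` of
the ray `r`. -/
def InDeletedEnd (G : SimpleGraph V) (r : ℕ → V)
    (f : ℕ → ((Dom G r)ᶜ : Set V)) : Prop :=
  IsRay (Gmin G r) f ∧ EquivRay G (fun n => (f n : V)) r

/-- An `ω̂`-region of `G_ω`: induced connected, finite vertex-boundary,
containing a ray of `ω̂`. -/
def IsOmegaRegion (G : SimpleGraph V) (r : ℕ → V)
    (A : Set ((Dom G r)ᶜ : Set V)) : Prop :=
  ((Gmin G r).induce A).Connected ∧ (vBoundary (Gmin G r) A).Finite ∧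
    ∃ f, InDeletedEnd G r f ∧ Set.range f ⊆ A

/-- `(Ĥ_i) → ω̂` : a sequence of distinct nested `ω̂`-regions whose
vertex-boundaries are minimal separators. -/
def Converges (G : SimpleGraph V) (r : ℕ → V)
    (A : ℕ → Set ((Dom G r)ᶜ : Set V)) : Prop :=
  Function.Injective A ∧ (∀ i, IsOmegaRegion G r (A i)) ∧
    (∀ i, A (i + 1) ⊆ A i \ vBoundary (Gmin G r) (A i)) ∧
    (∀ i, MinSepVertsEndsIn (Gmin G r) (vBoundary (Gmin G r) (A i))
      (vBoundary (Gmin G r) (A (i + 1))) (A (i + 1)))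

/-- The ratio `|∂_e A| / |∂_v A|`, as an extended nonnegative real. -/
noncomputable def bratio (G : SimpleGraph V) (A : Set V) : ℝ≥0∞ :=
  ((eBoundary G A).encard : ℝ≥0∞) / ((vBoundary G A).encard : ℝ≥0∞)

open Classical in
/-- The relative degree `d_{e/v}` of the end of the ray `r`. -/
noncomputable def relDegree (G : SimpleGraph V) (r : ℕ → V) : ℝ≥0∞ :=
  if (Dom G r).Infinite ∨ ¬ ∃ f, InDeletedEnd G r f then
    ((Dom G r).encard : ℝ≥0∞)
  else
    ((Dom G r).encard : ℝ≥0∞) +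
      ⨅ A : {A : ℕ → Set ((Dom G r)ᶜ : Set V) // Converges G r A},
        Filter.atTop.liminf fun i => bratio (Gmin G r) (A.1 i)

/-- The degree of a vertex, as an extended real. -/
noncomputable def degER (G : SimpleGraph V) (v : V) : EReal :=
  (((G.neighborSet v).encard : ℝ≥0∞) : EReal)

/-- A subdivision of `K_k` in `G` with branching vertices `b 0, …, b (k-1)`. -/
def HasTKOn (G : SimpleGraph V) {k : ℕ} (b : Fin k ↪ V) : Prop :=
  ∃ p : ∀ i j : Fin k, G.Walk (b i) (b j),
    (∀ i j, i ≠ j → (p i j).IsPath) ∧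
    (∀ i j, i ≠ j → ∀ x ∈ (p i j).support, x ∈ Set.range b → x = b i ∨ x = b j) ∧
    (∀ i j i' j', i ≠ j → i' ≠ j' → s(i, j) ≠ s(i', j') →
      ∀ x ∈ (p i j).support, x ∈ (p i' j').support → x ∈ Set.range b)

/-- `K_k` is a topological minor of `G`. -/
def HasTopK (G : SimpleGraph V) (k : ℕ) : Prop :=
  ∃ b : Fin k ↪ V, HasTKOn G b

/-- A subdivision of `K_{ℵ₀}` in `G` with branching vertices `b 0, b 1, …`. -/
def HasTKInfOn (G : SimpleGraph V) (b : ℕ ↪ V) : Prop :=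
  ∃ p : ∀ i j : ℕ, G.Walk (b i) (b j),
    (∀ i j, i ≠ j → (p i j).IsPath) ∧
    (∀ i j, i ≠ j → ∀ x ∈ (p i j).support, x ∈ Set.range b → x = b i ∨ x = b j) ∧
    (∀ i j i' j', i ≠ j → i' ≠ j' → s(i, j) ≠ s(i', j') →
      ∀ x ∈ (p i j).support, x ∈ (p i' j').support → x ∈ Set.range b)

/-- `K_k` is a minor of `G` (with finite branch sets). -/
def HasKMinor (G : SimpleGraph V) (k : ℕ) : Prop :=
  ∃ B : Fin k → Finset V,
    (∀ i, (B i).Nonempty) ∧ (∀ i j, i ≠ j → Disjoint (B i) (B j)) ∧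
    (∀ i, (G.induce (B i : Set V)).Connected) ∧
    (∀ i j, i ≠ j → ∃ x ∈ B i, ∃ y ∈ B j, G.Adj x y)

/-- The average degree of the finite induced subgraph of `G` on `s`. -/
noncomputable def avgDegOn (G : SimpleGraph V) (s : Finset V) : ℝ :=
  (∑ v ∈ s, ((G.neighborSet v ∩ ↑s).ncard : ℝ)) / s.card

/-- `G` is rayless. -/
def Rayless (G : SimpleGraph V) : Prop := ¬ ∃ f : ℕ → V, IsRay G f

/-- The average degree of the vertex set `F` into `A` in `G`. -/
noncomputable def avgDegIn (G : SimpleGraph V) (A F : Set V) : ℝ :=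
  (∑ᶠ v ∈ F, ((G.neighborSet v ∩ A).ncard : ℝ)) / F.ncard

/-!
Call `i` the level of the vertices of `K_i`. Levels are finite, so the graph is locally finite:
no vertex dominates the end, and any two rays are equivalent because a finite set lies below
some level, above which any two vertices are joined by a walk. Now let `(H_i) → ω`. The top
level `K_{m+1}` met by `∂_v H_{i+1}` already separates `∂_v H_i` from the end, so minimality
forces `∂_v H_{i+1} = K_{m+1}`, with `K_m` outside `H_{i+1}` and all higher levels inside. Then
`∂_e H_{i+1}` consists of the `k²` edges between `K_{m+1}` and `K_m`, so every `H_j` with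
`j ≥ 1` has ratio `k²/k = k`. The regions above `K_i` form such a sequence, so the infimum
is `k`.
-/

open SimpleGraph Function

section

variable {G : SimpleGraph V} {A : Set V}

lemma mem_of_adj_of_notMem_vBoundary {x y : V} (hx : x ∈ A) (hxA : x ∉ vBoundary G A)
    (h : G.Adj x y) : y ∈ A := by
  by_contra hy
  exact hxA ⟨hx, y, hy, h⟩

lemma mem_of_walk_avoiding_vBoundary {x y : V} (w : G.Walk x y) (hx : x ∈ A)
    (hw : ∀ z ∈ w.support, z ∉ vBoundary G A) : y ∈ A := by
  induction w with
  | nil => exact hx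
  | cons h w ih =>
    simp only [Walk.support_cons, List.mem_cons, forall_eq_or_imp] at hw
    exact ih (mem_of_adj_of_notMem_vBoundary hx hw.1 h) hw.2

lemma vBoundary_nonempty (hG : G.Preconnected) {a b : V} (ha : a ∈ A) (hb : b ∉ A) :
    (vBoundary G A).Nonempty := by
  by_contra hA
  rw [Set.not_nonempty_iff_eq_empty] at hA
  exact hb (mem_of_walk_avoiding_vBoundary (hG a b).some ha fun z _ => hA ▸ Set.notMem_empty z)

lemma not_dominatesRay_of_finite_neighborSet {v : V} {r : ℕ → V}
    (hv : (G.neighborSet v).Finite) (hr : Injective r) : ¬ DominatesRay G v r := by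
  rintro ⟨g, p, hg, -, hdisj⟩
  have hnil : {n | (p n).Nil}.Subsingleton := fun m hm n hn =>
    hg (hr (hm.eq.symm.trans hn.eq))
  have hsnd : Set.InjOn (fun n => (p n).snd) {n | ¬ (p n).Nil} := by
    intro m hm n hn (h : (p m).snd = (p n).snd)
    by_contra hmn
    have hv : (p m).snd = v :=
      hdisj m n hmn _ (Walk.getVert_mem_support _ _) (h ▸ Walk.getVert_mem_support _ _)
    exact G.irrefl (hv ▸ Walk.adj_snd hm)
  have hfin : {n | ¬ (p n).Nil}.Finite :=
    .of_finite_image (hv.subset (by rintro _ ⟨n, hn, rfl⟩; exact Walk.adj_snd hn)) hsnd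
  exact Set.infinite_univ ((hnil.finite.union hfin).subset fun n _ => em _)

end

section Layered

variable {lvl : V → ℕ}

lemma finite_preimage_Iic (hfin : ∀ n, (lvl ⁻¹' {n}).Finite) (N : ℕ) :
    (lvl ⁻¹' Set.Iic N).Finite := by
  rw [← Set.biUnion_of_singleton (Set.Iic N), Set.preimage_iUnion₂]
  exact (Set.finite_Iic N).biUnion fun n _ => hfin n

lemma tendsto_comp_atTop (hfin : ∀ n, (lvl ⁻¹' {n}).Finite) {f : ℕ → V}
    (hf : Injective f) : Filter.Tendsto (lvl ∘ f) .atTop .atTop := by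
  have hlvl : Filter.Tendsto lvl .cofinite .atTop := Filter.tendsto_atTop.2 fun N =>
    (finite_preimage_Iic hfin N).subset fun x (hx : ¬ N ≤ lvl x) =>
      Set.mem_Iic.2 (not_le.1 hx).le
  exact hlvl.comp (Nat.cofinite_eq_atTop ▸ hf.tendsto_cofinite)

lemma surjective_of_encard_fiber_eq {k : ℕ} (hk : 0 < k)
    (hcard : ∀ n, (lvl ⁻¹' {n}).encard = k) : Surjective lvl := fun n =>
  (Set.encard_ne_zero (s := lvl ⁻¹' {n})).1 (by rw [hcard]; exact_mod_cast hk.ne')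

def IsLayered (H : SimpleGraph V) (lvl : V → ℕ) : Prop :=
  ∀ a b, H.Adj a b ↔ a ≠ b ∧ (lvl a = lvl b ∨ lvl a = lvl b + 1 ∨ lvl b = lvl a + 1)

lemma isLayered_fromRel :
    IsLayered (fromRel fun a b : V => lvl a = lvl b ∨ lvl a = lvl b + 1) lvl := by
  intro a b
  rw [fromRel_adj]
  constructor <;> rintro ⟨hab, h⟩ <;> exact ⟨hab, by omega⟩

namespace IsLayered

variable {H : SimpleGraph V}

lemma lvl_le_succ_of_adj (hH : IsLayered H lvl) {a b : V} (h : H.Adj a b) :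
    lvl b ≤ lvl a + 1 := by
  rcases ((hH a b).1 h).2 with h | h | h <;> omega

lemma adj_of_lvl_eq_succ (hH : IsLayered H lvl) {a b : V} (h : lvl a = lvl b + 1) :
    H.Adj a b :=
  (hH a b).2 ⟨by rintro rfl; omega, Or.inr (Or.inl h)⟩

lemma adj_of_lvl_eq (hH : IsLayered H lvl) {a b : V} (hab : a ≠ b) (h : lvl a = lvl b) :
    H.Adj a b :=
  (hH a b).2 ⟨hab, Or.inl h⟩

lemma induce (hH : IsLayered H lvl) (s : Set V) : IsLayered (H.induce s) fun x => lvl x :=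
  fun a b => by rw [comap_adj, hH, Embedding.coe_subtype, Ne, Ne, Subtype.ext_iff]

lemma exists_walk (hH : IsLayered H lvl) (hsurj : Surjective lvl) (a b : V) :
    ∃ w : H.Walk a b, ∀ z ∈ w.support, min (lvl a) (lvl b) ≤ lvl z := by
  have upward : ∀ d a b, lvl b = lvl a + d →
      ∃ w : H.Walk a b, ∀ z ∈ w.support, lvl a ≤ lvl z := by
    intro d
    induction d with
    | zero =>
      intro a b hb
      by_cases hab : a = b
      · subst hab
        exact ⟨.nil, by simp⟩
      · refine ⟨.cons (hH.adj_of_lvl_eq hab hb.symm) .nil, ?_⟩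
        simp [hb]
    | succ d ih =>
      intro a b hb
      obtain ⟨c, hc⟩ := hsurj (lvl a + d)
      obtain ⟨w, hw⟩ := ih a c hc
      refine ⟨w.concat (hH.adj_of_lvl_eq_succ (by omega : lvl b = lvl c + 1)).symm, ?_⟩
      simp only [Walk.support_concat, List.mem_append, List.mem_singleton]
      rintro z (hz | rfl)
      exacts [hw z hz, by omega]
  rcases le_total (lvl a) (lvl b) with hab | hba
  · obtain ⟨w, hw⟩ := upward (lvl b - lvl a) a b (by omega)
    exact ⟨w, by simpa [hab] using hw⟩
  · obtain ⟨w, hw⟩ := upward (lvl a - lvl b) b a (by omega)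
    exact ⟨w.reverse, by simpa [hba] using hw⟩

lemma isRay_of_lvl_succ (hH : IsLayered H lvl) {f : ℕ → V}
    (hf : ∀ n, lvl (f (n + 1)) = lvl (f n) + 1) : IsRay H f where
  inj := (strictMono_nat_of_lt_succ (f := lvl ∘ f) fun n => by simp [hf]).injective.of_comp
  adj n := (hH.adj_of_lvl_eq_succ (hf n)).symm

lemma exists_isRay (hH : IsLayered H lvl) (hsurj : Surjective lvl) (w : V) :
    ∃ f, IsRay H f ∧ f 0 = w ∧ ∀ n, lvl (f n) = lvl w + n := by
  choose c hc using hsurj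
  have hlvl : ∀ n, lvl (if n = 0 then w else c (lvl w + n)) = lvl w + n := by
    intro n
    split_ifs with hn
    · simp [hn]
    · exact hc _
  exact ⟨_, hH.isRay_of_lvl_succ fun n => by rw [hlvl, hlvl]; rfl, if_pos rfl, hlvl⟩

lemma preconnected (hH : IsLayered H lvl) (hsurj : Surjective lvl) : H.Preconnected :=
  fun a b => ⟨(hH.exists_walk hsurj a b).choose⟩

lemma finite_neighborSet (hH : IsLayered H lvl) (hfin : ∀ n, (lvl ⁻¹' {n}).Finite) (v : V) :
    (H.neighborSet v).Finite :=
  (finite_preimage_Iic hfin (lvl v + 1)).subset fun _ h => Set.mem_Iic.2 (hH.lvl_le_succ_of_adj h)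

lemma lt_lvl_of_walk (hH : IsLayered H lvl) {s : ℕ} {x y : V} (w : H.Walk x y)
    (hw : ∀ z ∈ w.support, lvl z ≠ s) (hy : s < lvl y) : s < lvl x := by
  induction w with
  | nil => exact hy
  | cons h w ih =>
    simp only [Walk.support_cons, List.mem_cons, forall_eq_or_imp] at hw
    have := hH.lvl_le_succ_of_adj h
    have := ih hw.2 hy
    omega

lemma lt_lvl_of_isRay (hH : IsLayered H lvl) (hfin : ∀ n, (lvl ⁻¹' {n}).Finite) {f : ℕ → V}
    (hf : IsRay H f) {s n : ℕ} (hav : ∀ m, n ≤ m → lvl (f m) ≠ s) : s < lvl (f n) := by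
  obtain ⟨n', hs, hn'⟩ := ((tendsto_comp_atTop hfin hf.inj).eventually_gt_atTop s).and
    (Filter.eventually_ge_atTop n) |>.exists
  obtain ⟨d, rfl⟩ := Nat.exists_eq_add_of_le hn'
  clear hn'
  induction d generalizing n with
  | zero => exact hs
  | succ d ih =>
    have h1 := ih (n := n + 1) (fun m hm => hav m (by omega)) (by rwa [Nat.add_right_comm])
    have h2 := hH.lvl_le_succ_of_adj (hf.adj n)
    have h3 := hav n le_rfl
    omega

lemma equivRay (hH : IsLayered H lvl) (hsurj : Surjective lvl)
    (hfin : ∀ n, (lvl ⁻¹' {n}).Finite) {r s : ℕ → V} (hr : Injective r)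
    (hs : Injective s) : EquivRay H r s := by
  intro S hS
  obtain ⟨N, hN⟩ := (hS.image lvl).bddAbove
  obtain ⟨m, hm⟩ := ((tendsto_comp_atTop hfin hr).eventually_gt_atTop N).exists
  obtain ⟨n, hn⟩ := ((tendsto_comp_atTop hfin hs).eventually_gt_atTop N).exists
  obtain ⟨w, hw⟩ := hH.exists_walk hsurj (r m) (s n)
  refine ⟨m, n, w, fun z hz hzS => ?_⟩
  have := hN (Set.mem_image_of_mem lvl hzS)
  have := hw z hz
  simp only [comp_apply] at hm hn
  omega

lemma mem_of_le_lvl (hH : IsLayered H lvl) (hsurj : Surjective lvl) {A : Set V} {s : ℕ}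
    (hS : ∀ x ∈ vBoundary H A, lvl x ≤ s) {a : V} (ha : a ∈ A) (has : s < lvl a) {y : V}
    (hy : s ≤ lvl y) : y ∈ A := by
  have above : ∀ y, s < lvl y → y ∈ A := by
    intro y hy
    obtain ⟨w, hw⟩ := hH.exists_walk hsurj a y
    refine mem_of_walk_avoiding_vBoundary w ha fun z hz hzS => ?_
    have := hw z hz
    have := hS z hzS
    omega
  rcases hy.lt_or_eq with hy | hy
  · exact above y hy
  obtain ⟨y', hy'⟩ := hsurj (s + 1)
  exact mem_of_adj_of_notMem_vBoundary (above y' (by omega)) (fun h => by have := hS y' h; omega)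
    (hH.adj_of_lvl_eq_succ (by omega))

lemma sepVertsEndsIn_of_level_subset (hH : IsLayered H lvl) (hfin : ∀ n, (lvl ⁻¹' {n}).Finite)
    {V' T A : Set V} {s : ℕ} (hV'T : ¬ V' ⊆ T) (hV' : ∀ v ∈ V', lvl v ≤ s)
    (hT : lvl ⁻¹' {s} ⊆ T) : SepVertsEndsIn H V' T A := by
  refine ⟨hV'T, fun v hv f hf _ n htail ⟨w, hw⟩ => ?_⟩
  have hfn : s < lvl (f n) := hH.lt_lvl_of_isRay hfin hf fun m hm hs => htail m hm (hT hs)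
  have := hH.lt_lvl_of_walk w (fun z hz hs => hw z hz (hT hs)) hfn
  have := hV' v hv
  omega

lemma vBoundary_eq_level_of_minSep (hH : IsLayered H lvl) (hsurj : Surjective lvl)
    (hfin : ∀ n, (lvl ⁻¹' {n}).Finite) {A V' : Set V} {f : ℕ → V} (hf : IsRay H f)
    (hfA : Set.range f ⊆ A) (hSfin : (vBoundary H A).Finite) (hV'A : Disjoint V' A)
    (hmin : MinSepVertsEndsIn H V' (vBoundary H A) A) :
    ∃ m, vBoundary H A = lvl ⁻¹' {m + 1} ∧ (∀ x, lvl x = m → x ∉ A) ∧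
      ∀ x, m + 1 ≤ lvl x → x ∈ A := by
  set S := vBoundary H A
  obtain ⟨v₀, hv₀, hv₀S⟩ := Set.not_subset.1 hmin.1.1
  have hSne : S.Nonempty :=
    vBoundary_nonempty (hH.preconnected hsurj) (hfA ⟨0, rfl⟩) (hV'A.notMem_of_mem_left hv₀)
  obtain ⟨s, hsS, hmax⟩ := Set.exists_max_image S lvl hSfin hSne
  obtain ⟨n, hn⟩ := ((tendsto_comp_atTop hfin hf.inj).eventually_gt_atTop (lvl s)).exists
  have hup : ∀ y, lvl s ≤ lvl y → y ∈ A := fun y =>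
    hH.mem_of_le_lvl hsurj hmax (hfA ⟨n, rfl⟩) hn
  obtain ⟨-, y, hyA, hsy⟩ := hsS
  have hys : lvl s = lvl y + 1 := by
    have := hH.lvl_le_succ_of_adj hsy.symm
    have := mt (hup y) hyA
    omega
  have hlevel : lvl ⁻¹' {lvl y + 1} ⊆ S := fun x (hx : lvl x = _) =>
    ⟨hup x (hys.trans hx.symm).le, y, hyA, hH.adj_of_lvl_eq_succ hx⟩
  -- The level `lvl s` alone already separates, so by minimality `S` is no larger.
  have hS : S = lvl ⁻¹' {lvl y + 1} := by
    refine Set.Subset.antisymm (fun w hw => ?_) hlevel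
    by_contra hw'
    refine hmin.2 (S \ {w}) (Set.sdiff_singleton_ssubset.2 hw) <|
      hH.sepVertsEndsIn_of_level_subset hfin (fun h => hv₀S (h hv₀).1) (fun v hv => ?_)
        fun x hx => ⟨hlevel hx, fun (h : x = w) => hw' (h ▸ hx)⟩
    by_contra hv'
    exact hV'A.notMem_of_mem_left hv (hup v (by omega))
  refine ⟨lvl y, hS, fun x hx hxA => ?_, fun x hx => hup x (by omega)⟩
  by_cases hxy : x = y
  · exact hyA (hxy ▸ hxA)
  · have hxS : x ∈ S := ⟨hxA, y, hyA, hH.adj_of_lvl_eq hxy hx⟩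
    rw [hS, Set.mem_preimage, Set.mem_singleton_iff] at hxS
    omega

lemma bratio_eq (hH : IsLayered H lvl) {A : Set V} {m : ℕ}
    (hvB : vBoundary H A = lvl ⁻¹' {m + 1}) (hdown : ∀ x, lvl x = m → x ∉ A)
    (hup : ∀ x, m + 1 ≤ lvl x → x ∈ A) (hfin : (lvl ⁻¹' {m + 1}).Finite)
    (hne : (lvl ⁻¹' {m + 1}).Nonempty) : bratio H A = (lvl ⁻¹' {m}).encard := by
  have heB : eBoundary H A =
      (fun p : V × V => s(p.2, p.1)) '' ((lvl ⁻¹' {m}) ×ˢ (lvl ⁻¹' {m + 1})) := by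
    ext e
    constructor
    · rintro ⟨x, y, hx, hy, hxy, rfl⟩
      have hxm : x ∈ lvl ⁻¹' {m + 1} := hvB ▸ ⟨hx, y, hy, hxy⟩
      have := hH.lvl_le_succ_of_adj hxy.symm
      have := mt (hup y) hy
      simp only [Set.mem_preimage, Set.mem_singleton_iff] at hxm
      have hym : lvl y = m := by omega
      exact ⟨(y, x), ⟨hym, hxm⟩, rfl⟩
    · rintro ⟨⟨y, x⟩, ⟨hy : lvl y = m, hx : lvl x = m + 1⟩, rfl⟩
      exact ⟨x, y, hup x hx.ge, hdown y hy, hH.adj_of_lvl_eq_succ (by omega), rfl⟩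
  have hinj :
      Set.InjOn (fun p : V × V => s(p.2, p.1)) ((lvl ⁻¹' {m}) ×ˢ (lvl ⁻¹' {m + 1})) := by
    rintro ⟨y, x⟩ ⟨hy : lvl y = m, -⟩ ⟨y', x'⟩ ⟨-, hx' : lvl x' = m + 1⟩ h
    rcases Sym2.eq_iff.1 h with ⟨rfl, rfl⟩ | ⟨-, rfl⟩
    · rfl
    · dsimp only at hy hx'
      omega
  rw [bratio, heB, hinj.encard_image, Set.encard_prod, hvB, ENat.toENNReal_mul]
  exact ENNReal.mul_div_cancel_right (by simpa using hne.ne_empty) (by simpa using hfin)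

lemma connected_induce_upper (hH : IsLayered H lvl) (hsurj : Surjective lvl) (i : ℕ) :
    (H.induce {x | i ≤ lvl x}).Connected := by
  obtain ⟨x, hx⟩ := hsurj i
  refine (connected_iff _).2 ⟨fun a b => ?_, ⟨⟨x, hx.ge⟩⟩⟩
  obtain ⟨w, hw⟩ := hH.exists_walk hsurj a b
  exact ⟨w.induce _ fun z hz => (le_min a.2 b.2).trans (hw z hz)⟩

lemma vBoundary_upper (hH : IsLayered H lvl) (hsurj : Surjective lvl) (i : ℕ) :
    vBoundary H {x | i + 1 ≤ lvl x} = lvl ⁻¹' {i + 1} := by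
  ext x
  constructor
  · rintro ⟨hx : i + 1 ≤ lvl x, y, hy : ¬ i + 1 ≤ lvl y, hxy⟩
    have := hH.lvl_le_succ_of_adj hxy.symm
    show lvl x = i + 1
    omega
  · intro (hx : lvl x = i + 1)
    obtain ⟨y, hy⟩ := hsurj i
    exact ⟨hx.ge, y, by simp [hy], hH.adj_of_lvl_eq_succ (hx.trans (congrArg (· + 1) hy.symm))⟩

lemma minSepVertsEndsIn_level (hH : IsLayered H lvl) (hsurj : Surjective lvl)
    (hfin : ∀ n, (lvl ⁻¹' {n}).Finite) (s : ℕ) :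
    MinSepVertsEndsIn H (lvl ⁻¹' {s}) (lvl ⁻¹' {s + 1}) {x | s + 1 ≤ lvl x} := by
  obtain ⟨v, hv : lvl v = s⟩ := hsurj s
  refine ⟨hH.sepVertsEndsIn_of_level_subset hfin (fun h => ?_) (fun v (hv : lvl v = s) => ?_)
    subset_rfl, fun S' hS' hsep => ?_⟩
  · have : lvl v = s + 1 := h hv
    omega
  · omega
  obtain ⟨w, hw : lvl w = s + 1, hwS'⟩ := Set.exists_of_ssubset hS'
  have hS'lvl : ∀ x ∈ S', lvl x = s + 1 := fun x hx => hS'.subset hx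
  obtain ⟨f, hf, hf0, hflvl⟩ := hH.exists_isRay hsurj w
  refine hsep.2 v hv f hf (Set.range_subset_iff.2 fun n => ?_) 0 (fun m _ hm => ?_) ⟨?_, ?_⟩
  · show s + 1 ≤ lvl (f n)
    rw [hflvl, hw]
    omega
  · obtain rfl : m = 0 := by have := hS'lvl _ hm; rw [hflvl, hw] at this; omega
    exact hwS' (hf0 ▸ hm)
  · exact .cons (hH.adj_of_lvl_eq_succ (by rw [hf0, hw, hv])).symm .nil
  · simp only [Walk.support_cons, Walk.support_nil, List.mem_cons, List.not_mem_nil, or_false]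
    rintro z (rfl | rfl) hz
    · have := hS'lvl _ hz
      omega
    · exact hwS' (hf0 ▸ hz)

section DeletedEnd

variable {G : SimpleGraph V} {r : ℕ → V} {k : ℕ}

lemma dom_eq_empty (hH : IsLayered G lvl) (hfin : ∀ n, (lvl ⁻¹' {n}).Finite)
    (hr : Injective r) : Dom G r = ∅ :=
  Set.eq_empty_of_forall_notMem fun v =>
    not_dominatesRay_of_finite_neighborSet (hH.finite_neighborSet hfin v) hr

lemma surjective_gmin (hH : IsLayered G lvl) (hsurj : Surjective lvl)
    (hfin : ∀ n, (lvl ⁻¹' {n}).Finite) (hr : Injective r) :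
    Surjective fun x : ↥(Dom G r)ᶜ => lvl x := fun n => by
  obtain ⟨x, hx⟩ := hsurj n
  exact ⟨⟨x, by simp [hH.dom_eq_empty hfin hr]⟩, hx⟩

lemma exists_inDeletedEnd (hH : IsLayered G lvl) (hsurj : Surjective lvl)
    (hfin : ∀ n, (lvl ⁻¹' {n}).Finite) (hr : Injective r) (w : ↥(Dom G r)ᶜ) :
    ∃ f, InDeletedEnd G r f ∧ f 0 = w ∧ ∀ n, lvl (f n) = lvl w + n := by
  obtain ⟨f, hf, hf0, hflvl⟩ := (hH.induce _).exists_isRay (hH.surjective_gmin hsurj hfin hr) w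
  exact ⟨f, ⟨hf, hH.equivRay hsurj hfin (Subtype.val_injective.comp hf.inj) hr⟩, hf0, hflvl⟩

lemma converges_upper (hH : IsLayered G lvl) (hsurj : Surjective lvl)
    (hfin : ∀ n, (lvl ⁻¹' {n}).Finite) (hr : Injective r) :
    Converges G r fun i => {x | i + 1 ≤ lvl x} := by
  have hH' : IsLayered (Gmin G r) fun x => lvl x := hH.induce _
  have hsurj' := hH.surjective_gmin hsurj hfin hr
  have hfin' : ∀ n, ((fun x : ↥(Dom G r)ᶜ => lvl x) ⁻¹' {n}).Finite := fun n =>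
    (hfin n).preimage (f := Subtype.val) Subtype.val_injective.injOn
  refine ⟨fun i j hij => ?_, fun i => ⟨hH'.connected_induce_upper hsurj' (i + 1), ?_, ?_⟩,
    fun i => ?_, fun i => ?_⟩
  · obtain ⟨x, hx : lvl x = i + 1⟩ := hsurj' (i + 1)
    obtain ⟨y, hy : lvl y = j + 1⟩ := hsurj' (j + 1)
    have hxj : j + 1 ≤ lvl x := (Set.ext_iff.1 hij x).1 hx.ge
    have hyi : i + 1 ≤ lvl y := (Set.ext_iff.1 hij y).2 hy.ge
    omega
  · rw [hH'.vBoundary_upper hsurj']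
    exact hfin' _
  · obtain ⟨w, hw : lvl w = i + 1⟩ := hsurj' (i + 1)
    obtain ⟨f, hf, -, hflvl⟩ := hH.exists_inDeletedEnd hsurj hfin hr w
    refine ⟨f, hf, Set.range_subset_iff.2 fun n => ?_⟩
    show i + 1 ≤ lvl (f n)
    rw [hflvl, hw]
    omega
  · rw [hH'.vBoundary_upper hsurj']
    rintro x (hx : i + 2 ≤ lvl x)
    exact ⟨(by omega : i + 1 ≤ lvl x), fun (h : lvl x = i + 1) => by omega⟩
  · rw [hH'.vBoundary_upper hsurj', hH'.vBoundary_upper hsurj']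
    exact hH'.minSepVertsEndsIn_level hsurj' hfin' (i + 1)

lemma bratio_gmin_of_converges (hH : IsLayered G lvl) (hk : 0 < k)
    (hcard : ∀ n, (lvl ⁻¹' {n}).encard = k) (hr : Injective r)
    {A : ℕ → Set ↥(Dom G r)ᶜ} (hA : Converges G r A) (i : ℕ) :
    bratio (Gmin G r) (A (i + 1)) = k := by
  have hdom := hH.dom_eq_empty (fun n => Set.finite_of_encard_eq_coe (hcard n)) hr
  have hcard' : ∀ n, ((fun x : ↥(Dom G r)ᶜ => lvl x) ⁻¹' {n}).encard = k := fun n => by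
    rw [← hcard n]
    exact Set.encard_preimage_of_injective_subset_range (f := Subtype.val) (t := lvl ⁻¹' {n})
      Subtype.val_injective (by simp [hdom])
  have hfin' := fun n => Set.finite_of_encard_eq_coe (hcard' n)
  have hsurj' := surjective_of_encard_fiber_eq hk hcard'
  have hH' : IsLayered (Gmin G r) fun x => lvl x := hH.induce _
  obtain ⟨-, hreg, hnest, hmin⟩ := hA
  obtain ⟨-, hSfin, f, hf, hfA⟩ := hreg (i + 1)
  have hdisj : Disjoint (vBoundary (Gmin G r) (A i)) (A (i + 1)) :=
    Set.disjoint_right.2 fun x hx => (hnest i hx).2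
  obtain ⟨m, hvB, hdown, hup⟩ :=
    hH'.vBoundary_eq_level_of_minSep hsurj' hfin' hf.1 hfA hSfin hdisj (hmin i)
  rw [hH'.bratio_eq hvB hdown hup (hfin' _) (hsurj' (m + 1)), hcard' m]
  rfl

theorem relDegree_eq (hH : IsLayered G lvl) (hk : 0 < k)
    (hcard : ∀ n, (lvl ⁻¹' {n}).encard = k) (hr : Injective r) : relDegree G r = k := by
  have hfin := fun n => Set.finite_of_encard_eq_coe (hcard n)
  have hsurj := surjective_of_encard_fiber_eq hk hcard
  have hdom := hH.dom_eq_empty hfin hr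
  obtain ⟨f, hf, -⟩ := hH.exists_inDeletedEnd hsurj hfin hr ⟨r 0, by simp [hdom]⟩
  have hlim (A : {A // Converges G r A}) :
      Filter.atTop.liminf (fun i => bratio (Gmin G r) (A.1 i)) = k := by
    refine (Filter.liminf_congr (Filter.eventually_atTop.2 ⟨1, fun i hi => ?_⟩)).trans
      (Filter.liminf_const (k : ℝ≥0∞))
    obtain ⟨i, rfl⟩ := Nat.exists_eq_add_of_le' hi
    exact hH.bratio_gmin_of_converges hk hcard hr A.2 i
  have : Nonempty {A // Converges G r A} := ⟨⟨_, hH.converges_upper hsurj hfin hr⟩⟩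
  have hdom0 : (Dom G r).encard = 0 := by simp [hdom]
  rw [relDegree, if_neg (by simpa [hdom] using ⟨f, hf⟩), hdom0, iInf_congr hlim, iInf_const]
  simp

end DeletedEnd

end IsLayered

end Layered

/-- for every `k ≥ 1` the locally finite one-ended graph obtained
from countably many copies of `K_k` by joining consecutive copies completely
has a unique end, whose relative degree is exactly `k`. -/
theorem relDegree_eq_k (k : ℕ) (hk : 0 < k) :
    ∃ G : SimpleGraph (ℕ × Fin k),
      (∀ p q : ℕ × Fin k, G.Adj p q ↔
          p ≠ q ∧ (p.1 = q.1 ∨ p.1 = q.1 + 1 ∨ q.1 = p.1 + 1)) ∧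
      (∀ v, (G.neighborSet v).Finite) ∧
      (∃ r : ℕ → ℕ × Fin k, IsRay G r) ∧
      (∀ r s : ℕ → ℕ × Fin k, IsRay G r → IsRay G s → EquivRay G r s) ∧
      ∀ r : ℕ → ℕ × Fin k, IsRay G r → relDegree G r = (k : ℝ≥0∞) := by
  have hH := isLayered_fromRel (lvl := (Prod.fst : ℕ × Fin k → ℕ))
  have hcard (n : ℕ) : (Prod.fst ⁻¹' {n} : Set (ℕ × Fin k)).encard = k := by
    simp [← Set.prod_univ]
  have hfin := fun n => Set.finite_of_encard_eq_coe (hcard n)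
  have hsurj := surjective_of_encard_fiber_eq hk hcard
  obtain ⟨f, hf, -⟩ := hH.exists_isRay hsurj (0, ⟨0, hk⟩)
  exact ⟨_, hH, hH.finite_neighborSet hfin, ⟨f, hf⟩,
    fun r s hr hs => hH.equivRay hsurj hfin hr.inj hs.inj,
    fun r hr => hH.relDegree_eq hk hcard hr.inj⟩

end Paper
end

section
/- Let G be a graph, let (H_i) be a sequence of distinct regions with H_{i+1} ⊆ H_i − ∂_v H_i each containing a ray of a fixed end ω (no minimality requirement on the boundaries). Then there exists another such sequence (H'_j), each H'_j obtained by deleting finitely many vertices from some H_{i_j}, with liminf_j |∂_e H'_j|/|∂_v H'_j| = 1. Hence without the minimal-separator requirement in the definition, the relative degree of every end (with such a sequence and vertices of finite degree available on the boundaries) would be at most 1. -/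
open scoped ENNReal

namespace Paper

variable {V : Type*} {W : Type*}

/-!
Choose `b m ∈ ∂_v (A m)`. Its closed neighbourhood lies in `A (m - 1)` but misses `A (m + 2)`,
so boundary vertices chosen three levels apart have disjoint closed neighbourhoods, and those
chosen at levels `≥ k + 2` lie in the interior of `A k`. Deleting such a set `F` from `A k` adds
exactly the neighbours of `F` to the vertex boundary and the edges at `F` to the edge boundary;
with `d = ∑ v ∈ F, deg v ≥ |F|` this gives `|∂_e| ≤ |∂_e (A k)| + d` and `d ≤ |∂_v|`. Deleting
`j · |∂_e (A k)|` vertices therefore brings the ratio below `1 + 1/j`, while it never drops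
below `1` since every boundary vertex has a boundary edge. Cutting the `j`-th region far enough
down the sequence keeps the new regions nested.
-/

def closedNeighborSet (G : SimpleGraph V) (v : V) : Set V := insert v (G.neighborSet v)

theorem mem_closedNeighborSet_comm {G : SimpleGraph V} {v w : V} :
    v ∈ closedNeighborSet G w ↔ w ∈ closedNeighborSet G v := by
  simp [closedNeighborSet, eq_comm, G.adj_comm]

section Boundary

variable {G : SimpleGraph V} {A : Set V}

theorem encard_vBoundary_le_encard_eBoundary :
    (vBoundary G A).encard ≤ (eBoundary G A).encard := by
  choose! out hout using fun x (hx : x ∈ vBoundary G A) => hx.2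
  refine Set.encard_le_encard_of_injOn (f := fun x => s(x, out x))
    (fun x hx => ⟨x, out x, hx.1, (hout x hx).1, (hout x hx).2, rfl⟩) ?_
  intro x hx x' hx' h
  rcases Sym2.eq_iff.mp h with ⟨rfl, -⟩ | ⟨rfl, -⟩
  · rfl
  · exact absurd hx.1 (hout x' hx').1

theorem eBoundary_subset_biUnion_incidenceSet :
    eBoundary G A ⊆ ⋃ x ∈ vBoundary G A, G.incidenceSet x := by
  rintro _ ⟨x, y, hx, hy, hxy, rfl⟩
  exact Set.mem_biUnion ⟨hx, y, hy, hxy⟩ ⟨hxy, Sym2.mem_mk_left x y⟩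

theorem eBoundary_finite [G.LocallyFinite] (h : (vBoundary G A).Finite) :
    (eBoundary G A).Finite := by
  classical
  exact (h.biUnion fun x _ => (G.incidenceSet x).toFinite).subset
    eBoundary_subset_biUnion_incidenceSet

theorem one_le_bratio (hne : (vBoundary G A).Nonempty) (hfin : (vBoundary G A).Finite) :
    1 ≤ bratio G A := by
  have h0 : ((vBoundary G A).encard : ℝ≥0∞) ≠ 0 := by simpa using hne.ne_empty
  have htop : ((vBoundary G A).encard : ℝ≥0∞) ≠ ⊤ := by simpa using hfin
  rw [bratio, ENNReal.le_div_iff_mul_le (Or.inl h0) (Or.inl htop), one_mul]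
  exact ENat.toENNReal_le.mpr encard_vBoundary_le_encard_eBoundary

end Boundary

section Deletion

variable {G : SimpleGraph V} {A F : Set V}

theorem vBoundary_sdiff (hin : ∀ v ∈ F, closedNeighborSet G v ⊆ A \ vBoundary G A)
    (hdisj : F.PairwiseDisjoint (closedNeighborSet G)) :
    vBoundary G (A \ F) = vBoundary G A ∪ ⋃ v ∈ F, G.neighborSet v := by
  ext x
  constructor
  · rintro ⟨⟨hxA, -⟩, y, hy, hxy⟩
    by_cases hyA : y ∈ A
    · exact Or.inr (Set.mem_biUnion (of_not_not fun hyF => hy ⟨hyA, hyF⟩) hxy.symm)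
    · exact Or.inl ⟨hxA, y, hyA, hxy⟩
  · rintro (hx | hx)
    · obtain ⟨y, hy, hxy⟩ := hx.2
      have hxF : x ∉ F := fun hxF => (hin x hxF (Set.mem_insert x _)).2 hx
      exact ⟨⟨hx.1, hxF⟩, y, fun h => hy h.1, hxy⟩
    · obtain ⟨v, hv, hvx⟩ := Set.mem_iUnion₂.mp hx
      have hxF : x ∉ F := fun hxF => Set.disjoint_left.mp (hdisj hxF hv hvx.ne')
        (Set.mem_insert x _) (Set.mem_insert_of_mem v hvx)
      exact ⟨⟨(hin v hv (Set.mem_insert_of_mem v hvx)).1, hxF⟩, v, fun h => h.2 hv, hvx.symm⟩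

theorem eBoundary_sdiff_subset :
    eBoundary G (A \ F) ⊆ eBoundary G A ∪ ⋃ v ∈ F, G.incidenceSet v := by
  rintro _ ⟨x, y, ⟨hxA, -⟩, hy, hxy, rfl⟩
  by_cases hyA : y ∈ A
  · exact Or.inr (Set.mem_biUnion (of_not_not fun hyF => hy ⟨hyA, hyF⟩)
      ⟨hxy, Sym2.mem_mk_right x y⟩)
  · exact Or.inl ⟨x, y, hxA, hyA, hxy, rfl⟩

variable [G.LocallyFinite]

theorem encard_eBoundary_sdiff_le (F : Finset V) :
    (eBoundary G (A \ F)).encard ≤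
      (eBoundary G A).encard + ((∑ v ∈ F, G.degree v : ℕ) : ℕ∞) := by
  classical
  have hinc :
      ⋃ v ∈ (F : Set V), G.incidenceSet v = F.biUnion fun v => G.incidenceFinset v := by
    simp only [Finset.coe_biUnion, SimpleGraph.coe_incidenceFinset]
  calc (eBoundary G (A \ F)).encard
      ≤ (eBoundary G A).encard +
          (F.biUnion fun v => G.incidenceFinset v : Set (Sym2 V)).encard := by
        rw [← hinc]
        exact (Set.encard_le_encard eBoundary_sdiff_subset).trans (Set.encard_union_le _ _)
    _ ≤ _ := by
        rw [Set.encard_coe_eq_coe_finsetCard]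
        gcongr
        exact Finset.card_biUnion_le.trans_eq
          (Finset.sum_congr rfl fun v _ => G.card_incidenceFinset_eq_degree v)

theorem sum_degree_le_encard_vBoundary_sdiff {F : Finset V}
    (hin : ∀ v ∈ F, closedNeighborSet G v ⊆ A \ vBoundary G A)
    (hdisj : (F : Set V).PairwiseDisjoint (closedNeighborSet G)) :
    ((∑ v ∈ F, G.degree v : ℕ) : ℕ∞) ≤ (vBoundary G (A \ F)).encard := by
  classical
  have hN : (F : Set V).PairwiseDisjoint fun v => G.neighborFinset v := fun v hv w hw hvw => by
    rw [Function.onFun, ← Finset.disjoint_coe, G.coe_neighborFinset, G.coe_neighborFinset]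
    exact (hdisj hv hw hvw).mono (Set.subset_insert _ _) (Set.subset_insert _ _)
  calc ((∑ v ∈ F, G.degree v : ℕ) : ℕ∞)
      = (F.biUnion fun v => G.neighborFinset v : Set V).encard := by
        rw [Set.encard_coe_eq_coe_finsetCard, Finset.card_biUnion hN]
        simp only [SimpleGraph.card_neighborFinset_eq_degree]
    _ ≤ _ := by
        refine Set.encard_le_encard ?_
        rw [vBoundary_sdiff hin hdisj, Finset.coe_biUnion]
        simp only [SimpleGraph.coe_neighborFinset]
        exact Set.subset_union_right

end Deletion

theorem div_le_one_add_inv {a b c d : ℝ≥0∞} {m : ℕ} (hc : c ≠ 0) (hd : d ≠ ⊤)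
    (ha : a ≤ c + d) (hb : d ≤ b) (hm : m * c ≤ d) : a / b ≤ 1 + (m : ℝ≥0∞)⁻¹ := by
  rcases eq_or_ne m 0 with rfl | hm0
  · simp
  have hm0' : (m : ℝ≥0∞) ≠ 0 := Nat.cast_ne_zero.mpr hm0
  have hd0 : d ≠ 0 := (pos_of_ne_zero (mul_ne_zero hm0' hc)).trans_le hm |>.ne'
  calc a / b ≤ (c + d) / d := ENNReal.div_le_div ha hb
    _ = c / d + 1 := by rw [ENNReal.add_div, ENNReal.div_self hd0 hd]
    _ ≤ (m : ℝ≥0∞)⁻¹ + 1 := by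
        gcongr
        rw [ENNReal.div_le_iff hd0 hd]
        exact (ENNReal.mul_le_iff_le_inv hm0' (ENNReal.natCast_ne_top m)).mp hm
    _ = 1 + (m : ℝ≥0∞)⁻¹ := add_comm _ _

theorem bratio_sdiff_le {G : SimpleGraph V} [G.LocallyFinite] {A : Set V} {F : Finset V}
    {m : ℕ}
    (hin : ∀ v ∈ F, closedNeighborSet G v ⊆ A \ vBoundary G A)
    (hdisj : (F : Set V).PairwiseDisjoint (closedNeighborSet G))
    (hE : (eBoundary G A).encard ≠ 0)
    (hm : m * (eBoundary G A).encard ≤ ((∑ v ∈ F, G.degree v : ℕ) : ℕ∞)) :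
    bratio G (A \ F) ≤ 1 + (m : ℝ≥0∞)⁻¹ := by
  refine div_le_one_add_inv (c := ((eBoundary G A).encard : ℝ≥0∞))
    (d := (((∑ v ∈ F, G.degree v : ℕ) : ℕ∞) : ℝ≥0∞)) (by simpa using hE) (by simp) ?_ ?_ ?_
  · rw [← ENat.toENNReal_add, ENat.toENNReal_le]
    exact encard_eBoundary_sdiff_le F
  · exact ENat.toENNReal_le.mpr (sum_degree_le_encard_vBoundary_sdiff hin hdisj)
  · rw [← ENat.toENNReal_coe m, ← ENat.toENNReal_mul, ENat.toENNReal_le]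
    exact hm

theorem liminf_eq_one_of_le_one_add_inv {u : ℕ → ℝ≥0∞} (h1 : ∀ j, 1 ≤ u j)
    (h2 : ∀ j, u j ≤ 1 + (j : ℝ≥0∞)⁻¹) : Filter.atTop.liminf u = 1 := by
  refine Filter.Tendsto.liminf_eq
    (tendsto_of_tendsto_of_tendsto_of_le_of_le tendsto_const_nhds ?_ h1 h2)
  simpa using (tendsto_const_nhds (x := (1 : ℝ≥0∞))).add ENNReal.tendsto_inv_nat_nhds_zero

def IsNested (G : SimpleGraph V) (A : ℕ → Set V) : Prop :=
  ∀ i, A (i + 1) ⊆ A i \ vBoundary G (A i)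

namespace IsNested

variable {G : SimpleGraph V} {A : ℕ → Set V} {b v : V} {i : ℕ}

theorem antitone (hA : IsNested G A) : Antitone A :=
  antitone_nat_of_succ_le fun i => (hA i).trans Set.sdiff_subset

theorem neighborSet_subset (hA : IsNested G A) (hv : v ∈ A (i + 1)) : G.neighborSet v ⊆ A i :=
  fun y hvy => by_contra fun hy => (hA i hv).2 ⟨(hA i hv).1, y, hy, hvy⟩

theorem closedNeighborSet_subset (hA : IsNested G A) (hv : v ∈ A (i + 1)) :
    closedNeighborSet G v ⊆ A i :=
  Set.insert_subset (hA.antitone i.le_succ hv) (hA.neighborSet_subset hv)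

theorem closedNeighborSet_subset_interior (hA : IsNested G A) (hv : v ∈ A (i + 2)) :
    closedNeighborSet G v ⊆ A i \ vBoundary G (A i) :=
  (hA.closedNeighborSet_subset hv).trans (hA i)

theorem notMem_succ_of_mem_vBoundary (hA : IsNested G A) (hb : b ∈ vBoundary G (A i)) :
    b ∉ A (i + 1) :=
  fun h => (hA i h).2 hb

theorem disjoint_closedNeighborSet (hA : IsNested G A) (hb : b ∈ vBoundary G (A i)) :
    Disjoint (closedNeighborSet G b) (A (i + 2)) :=
  Set.disjoint_left.mpr fun _ hbx hx => hA.notMem_succ_of_mem_vBoundary hb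
    (hA.closedNeighborSet_subset hx (mem_closedNeighborSet_comm.mp hbx))

theorem injective_of_mem_vBoundary (hA : IsNested G A) {b : ℕ → V}
    (hb : ∀ i, b i ∈ vBoundary G (A i)) : Function.Injective b := by
  intro i j hij
  by_contra hne
  wlog hlt : i < j generalizing i j
  · exact this hij.symm (Ne.symm hne) (by omega)
  exact hA.notMem_succ_of_mem_vBoundary (hb i) (hA.antitone hlt (hij ▸ (hb j).1))

theorem injective (hA : IsNested G A) (hne : ∀ i, (vBoundary G (A i)).Nonempty) :
    Function.Injective A := by
  refine StrictAnti.injective (strictAnti_nat_of_succ_lt fun i => ?_)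
  obtain ⟨b, hb⟩ := hne i
  exact (hA.antitone i.le_succ).lt_of_ne fun h => hA.notMem_succ_of_mem_vBoundary hb (h ▸ hb.1)

end IsNested

/-- Levels three apart, so that the closed neighbourhoods are pairwise disjoint. -/
def spacedVertices [DecidableEq V] (b : ℕ → V) (k n : ℕ) : Finset V :=
  (Finset.range n).image fun t => b (k + 2 + 3 * t)

section SpacedVertices

variable [DecidableEq V] {G : SimpleGraph V} {A : ℕ → Set V} {b : ℕ → V} {k n : ℕ}

theorem closedNeighborSet_subset_of_mem_spacedVertices (hA : IsNested G A)
    (hb : ∀ i, b i ∈ vBoundary G (A i)) :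
    ∀ v ∈ spacedVertices b k n, closedNeighborSet G v ⊆ A k \ vBoundary G (A k) := by
  intro v hv
  obtain ⟨t, -, rfl⟩ := Finset.mem_image.mp hv
  exact hA.closedNeighborSet_subset_interior (hA.antitone (by omega) (hb _).1)

theorem pairwiseDisjoint_spacedVertices (hA : IsNested G A)
    (hb : ∀ i, b i ∈ vBoundary G (A i)) :
    (spacedVertices b k n : Set V).PairwiseDisjoint (closedNeighborSet G) := by
  have key : ∀ t t', t < t' → Disjoint (closedNeighborSet G (b (k + 2 + 3 * t)))
      (closedNeighborSet G (b (k + 2 + 3 * t'))) :=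
    fun t t' htt => (hA.disjoint_closedNeighborSet (hb _)).mono_right
      (hA.closedNeighborSet_subset (hA.antitone (by omega) (hb _).1))
  rw [spacedVertices, Finset.coe_image]
  rintro _ ⟨t, -, rfl⟩ _ ⟨t', -, rfl⟩ hne
  rcases lt_or_gt_of_ne (fun h : t = t' => hne (h ▸ rfl)) with htt | htt
  exacts [key t t' htt, (key t' t htt).symm]

theorem le_sum_degree_spacedVertices [G.LocallyFinite] (hA : IsNested G A)
    (hb : ∀ i, b i ∈ vBoundary G (A i)) : n ≤ ∑ v ∈ spacedVertices b k n, G.degree v := by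
  have hinj : Function.Injective fun t => b (k + 2 + 3 * t) :=
    (hA.injective_of_mem_vBoundary hb).comp fun t t' h => by omega
  have hcard : (spacedVertices b k n).card = n := by
    rw [spacedVertices, Finset.card_image_of_injective _ hinj, Finset.card_range]
  have hdeg : ∀ v ∈ spacedVertices b k n, 1 ≤ G.degree v := by
    intro v hv
    obtain ⟨t, -, rfl⟩ := Finset.mem_image.mp hv
    obtain ⟨y, -, hy⟩ := (hb (k + 2 + 3 * t)).2
    exact (G.degree_pos_iff_exists_adj _).mpr ⟨y, hy⟩
  simpa [hcard] using Finset.card_nsmul_le_sum _ _ 1 hdeg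

theorem subset_sdiff_vBoundary_sdiff_spacedVertices (hA : IsNested G A)
    (hb : ∀ i, b i ∈ vBoundary G (A i)) :
    A (k + 3 * n + 1) ⊆
      (A k \ spacedVertices b k n) \ vBoundary G (A k \ spacedVertices b k n) := by
  intro x hx
  have hfar : ∀ v ∈ spacedVertices b k n, x ∉ closedNeighborSet G v := by
    intro v hv hxv
    obtain ⟨t, ht, rfl⟩ := Finset.mem_image.mp hv
    have ht : t < n := Finset.mem_range.mp ht
    exact Set.disjoint_left.mp (hA.disjoint_closedNeighborSet (hb _)) hxv
      (hA.antitone (by omega) hx)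
  have hxk : x ∈ A k \ vBoundary G (A k) := hA k (hA.antitone (by omega) hx)
  rw [vBoundary_sdiff (closedNeighborSet_subset_of_mem_spacedVertices hA hb)
    (pairwiseDisjoint_spacedVertices hA hb)]
  refine ⟨⟨hxk.1, fun hxF => hfar x hxF (Set.mem_insert x _)⟩, ?_⟩
  rintro (hxB | hxN)
  · exact hxk.2 hxB
  · obtain ⟨v, hv, hvx⟩ := Set.mem_iUnion₂.mp hxN
    exact hfar v hv (Set.mem_insert_of_mem v hvx)

theorem bratio_sdiff_spacedVertices_le [G.LocallyFinite] (hA : IsNested G A)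
    (hb : ∀ i, b i ∈ vBoundary G (A i)) (hfin : (vBoundary G (A k)).Finite) (j : ℕ) :
    bratio G (A k \ spacedVertices b k (j * (eBoundary G (A k)).ncard)) ≤
      1 + (j : ℝ≥0∞)⁻¹ := by
  have hE : (eBoundary G (A k)).encard ≠ 0 :=
    ((Set.encard_pos.mpr ⟨b k, hb k⟩).trans_le encard_vBoundary_le_encard_eBoundary).ne'
  refine bratio_sdiff_le (closedNeighborSet_subset_of_mem_spacedVertices hA hb)
    (pairwiseDisjoint_spacedVertices hA hb) hE ?_
  rw [← (eBoundary_finite hfin).cast_ncard_eq]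
  exact_mod_cast le_sum_degree_spacedVertices hA hb

end SpacedVertices

/-- The region cut at step `j + 1` lies below every level used by `spacedVertices` at step `j`. -/
def cutIndex (e : ℕ → ℕ) : ℕ → ℕ
  | 0 => 0
  | j + 1 => cutIndex e j + 3 * (j * e (cutIndex e j)) + 1

theorem no_minimality_ratio_one_general (G : SimpleGraph V)
    (hlf : ∀ v, (G.neighborSet v).Finite) (r : ℕ → V)
    (A : ℕ → Set V)
    (hreg : ∀ i, (vBoundary G (A i)).Finite ∧ (vBoundary G (A i)).Nonempty ∧
        ∃ f, IsRay G f ∧ Set.range f ⊆ A i ∧ EquivRay G f r)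
    (hnest : ∀ i, A (i + 1) ⊆ A i \ vBoundary G (A i)) :
    ∃ A' : ℕ → Set V,
      Function.Injective A' ∧
      (∀ j, (vBoundary G (A' j)).Finite ∧
          ∃ f, IsRay G f ∧ Set.range f ⊆ A' j ∧ EquivRay G f r) ∧
      (∀ j, A' (j + 1) ⊆ A' j \ vBoundary G (A' j)) ∧
      (∀ j, ∃ i, ∃ F : Set V, F.Finite ∧ A' j = A i \ F) ∧
      Filter.atTop.liminf (fun j => bratio G (A' j)) = 1 := by
  classical
  let : G.LocallyFinite := fun v => (hlf v).fintype
  have hA : IsNested G A := hnest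
  choose b hb using fun i => (hreg i).2.1
  set k := cutIndex fun i => (eBoundary G (A i)).ncard
  set F : ℕ → Finset V := fun j => spacedVertices b (k j) (j * (eBoundary G (A (k j))).ncard)
  set A' : ℕ → Set V := fun j => A (k j) \ F j
  have hnext : ∀ j, A (k (j + 1)) ⊆ A' j \ vBoundary G (A' j) :=
    fun j => subset_sdiff_vBoundary_sdiff_spacedVertices hA hb
  have hA' : IsNested G A' := fun j => Set.sdiff_subset.trans (hnext j)
  have hvB : ∀ j, vBoundary G (A' j) = vBoundary G (A (k j)) ∪ ⋃ v ∈ F j, G.neighborSet v :=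
    fun j => vBoundary_sdiff (closedNeighborSet_subset_of_mem_spacedVertices hA hb)
      (pairwiseDisjoint_spacedVertices hA hb)
  have hne : ∀ j, (vBoundary G (A' j)).Nonempty :=
    fun j => (hreg (k j)).2.1.mono (hvB j ▸ Set.subset_union_left)
  have hfin : ∀ j, (vBoundary G (A' j)).Finite := fun j => hvB j ▸
    (hreg (k j)).1.union ((F j).finite_toSet.biUnion fun v _ => (G.neighborSet v).toFinite)
  refine ⟨A', hA'.injective hne, fun j => ⟨hfin j, ?_⟩, hA',
    fun j => ⟨k j, F j, (F j).finite_toSet, rfl⟩, ?_⟩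
  · obtain ⟨f, hf, hfA, hfr⟩ := (hreg (k (j + 1))).2.2
    exact ⟨f, hf, hfA.trans ((hnext j).trans Set.sdiff_subset), hfr⟩
  · exact liminf_eq_one_of_le_one_add_inv (fun j => one_le_bratio (hne j) (hfin j))
      fun j => bratio_sdiff_spacedVertices_le hA hb (hreg (k j)).1 j

/-- in a locally finite graph, given a sequence of distinct nested
regions containing rays of the end of `r` (with no minimality requirement on
the boundaries), one can delete finitely many vertices from suitable members of
the sequence to obtain another such sequence whose boundary ratios have liminf
exactly `1`. -/
theorem no_minimality_ratio_one (G : SimpleGraph V)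
    (hlf : ∀ v, (G.neighborSet v).Finite) (r : ℕ → V) (hr : IsRay G r)
    (A : ℕ → Set V) (hinj : Function.Injective A)
    (hreg : ∀ i, (vBoundary G (A i)).Finite ∧ (vBoundary G (A i)).Nonempty ∧
        ∃ f, IsRay G f ∧ Set.range f ⊆ A i ∧ EquivRay G f r)
    (hnest : ∀ i, A (i + 1) ⊆ A i \ vBoundary G (A i)) :
    ∃ A' : ℕ → Set V,
      Function.Injective A' ∧
      (∀ j, (vBoundary G (A' j)).Finite ∧
          ∃ f, IsRay G f ∧ Set.range f ⊆ A' j ∧ EquivRay G f r) ∧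
      (∀ j, A' (j + 1) ⊆ A' j \ vBoundary G (A' j)) ∧
      (∀ j, ∃ i, ∃ F : Set V, F.Finite ∧ A' j = A i \ F) ∧
      Filter.atTop.liminf (fun j => bratio G (A' j)) = 1 :=
  no_minimality_ratio_one_general G hlf r A hreg hnest

end Paper
end
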